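/- Let p be a prime, e ≥ 1, and A, B ∈ R = ℤ/p^eℤ. There exists a polynomial f ∈ R[x] of degree at most e − 1 such that for all X, Z ∈ R with p ∣ X, p ∣ Z and Z = X³ + A·X·Z² + B·Z³, one has Z = f(X). (Every point at infinity of the curve over ℤ/p^eℤ has the form (X : 1 : f(X)) with p ∣ X.) -/

import Mathlib

/-!
Iterating `F(w) = X³ + A·X·w² + B·w³` from `0` gives polynomials `w₀, w₁, …`; `wₖ` agrees
modulo `X^k` with the power series `w(X)` describing the curve near infinity. If `π ∣ X`,
`π ∣ Z` and `Z = F(Z)`, then `Z - wₖ(X)` gains a factor `π` at each step, since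
`F(Z) - F(wₖ(X))` factors as `(Z - wₖ(X))` times a multiple of `π`. Over `ℤ/p^eℤ`, where
`p^e = 0`, this gives `Z = wₑ(X)`; since also `X^e = 0`, `wₑ` may be reduced modulo `X^e`.
-/

open Polynomial

namespace Polynomial

variable {R : Type*} [CommRing R]

theorem natDegree_modByMonic_X_pow_le (f : R[X]) (n : ℕ) : (f %ₘ X ^ n).natDegree ≤ n - 1 := by
  by_cases h : (X ^ n : R[X]) = 1
  · simp [h, modByMonic_one]
  · have := natDegree_modByMonic_lt f (monic_X_pow n) h
    have := natDegree_X_pow_le (R := R) n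
    omega

theorem eval_modByMonic_X_pow_of_pow_eq_zero (f : R[X]) {n : ℕ} {x : R} (hx : x ^ n = 0) :
    (f %ₘ X ^ n).eval x = f.eval x :=
  eval₂_modByMonic_eq_self_of_root (by simpa using hx)

end Polynomial

namespace Weierstrass

variable {R : Type*} [CommRing R] (A B : R)

noncomputable def wSeriesApprox : ℕ → R[X]
  | 0 => 0
  | k + 1 => X ^ 3 + C A * X * wSeriesApprox k ^ 2 + C B * wSeriesApprox k ^ 3

theorem X_dvd_wSeriesApprox (k : ℕ) : X ∣ wSeriesApprox A B k := by
  induction k with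
  | zero => exact dvd_zero X
  | succ k ih =>
    exact dvd_add (dvd_add (dvd_pow_self X three_ne_zero)
      (dvd_mul_of_dvd_left (dvd_mul_left X (C A)) _))
      (dvd_mul_of_dvd_right (dvd_pow ih three_ne_zero) _)

theorem dvd_eval_wSeriesApprox {x : R} (k : ℕ) : x ∣ (wSeriesApprox A B k).eval x := by
  obtain ⟨q, hq⟩ := X_dvd_wSeriesApprox A B k
  rw [hq, eval_mul, eval_X]
  exact dvd_mul_right x _

variable {A B}

theorem pow_dvd_sub_eval_wSeriesApprox {π x w : R} (hx : π ∣ x) (hw : π ∣ w)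
    (hcurve : w = x ^ 3 + A * x * w ^ 2 + B * w ^ 3) (k : ℕ) :
    π ^ k ∣ w - (wSeriesApprox A B k).eval x := by
  induction k with
  | zero => simp
  | succ k ih =>
    set z := (wSeriesApprox A B k).eval x
    have hz : π ∣ z := hx.trans (dvd_eval_wSeriesApprox A B k)
    have step : w - (wSeriesApprox A B (k + 1)).eval x =
        (w - z) * (A * x * (w + z) + B * (w ^ 2 + w * z + z ^ 2)) := by
      simp only [wSeriesApprox, eval_add, eval_mul, eval_pow, eval_X, eval_C, z]
      linear_combination hcurve
    rw [step, pow_succ]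
    exact mul_dvd_mul ih (dvd_add ((hx.mul_left A).mul_right _)
      (((dvd_pow hw two_ne_zero).add (hz.mul_left w) |>.add (dvd_pow hz two_ne_zero)).mul_left B))

theorem eq_eval_wSeriesApprox_of_pow_eq_zero {π x w : R} {n : ℕ} (hπ : π ^ n = 0)
    (hx : π ∣ x) (hw : π ∣ w) (hcurve : w = x ^ 3 + A * x * w ^ 2 + B * w ^ 3) :
    w = (wSeriesApprox A B n).eval x := by
  have := pow_dvd_sub_eval_wSeriesApprox hx hw hcurve n
  rwa [hπ, zero_dvd_iff, sub_eq_zero] at this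

end Weierstrass

open Weierstrass in
theorem exists_infinity_polynomial
    {p : ℕ} {e : ℕ}
    (A B : ZMod (p ^ e)) :
    ∃ f : Polynomial (ZMod (p ^ e)),
      f.natDegree ≤ e - 1 ∧
      ∀ X Z : ZMod (p ^ e),
        (p : ZMod (p ^ e)) ∣ X → (p : ZMod (p ^ e)) ∣ Z →
        Z = X ^ 3 + A * X * Z ^ 2 + B * Z ^ 3 →
        Z = f.eval X := by
  refine ⟨wSeriesApprox A B e %ₘ X ^ e, natDegree_modByMonic_X_pow_le _ e, ?_⟩
  intro x z hx hz hcurve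
  have hpe : (p : ZMod (p ^ e)) ^ e = 0 := by rw [← Nat.cast_pow, ZMod.natCast_self]
  have hxe : x ^ e = 0 := zero_dvd_iff.mp (hpe ▸ pow_dvd_pow_of_dvd hx e)
  rw [eval_modByMonic_X_pow_of_pow_eq_zero _ hxe]
  exact eq_eval_wSeriesApprox_of_pow_eq_zero hpe hx hz hcurve
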